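/- If κ is an uncountable cardinal, then every class 𝒞 of structures of a fixed type τ ∈ H_κ that is Σ₁-definable with parameters in H_κ reflects below κ: for every B ∈ 𝒞 there is A ∈ 𝒞 ∩ H_κ and an elementary embedding of A into B. -/

import Mathlib

/-!  Common framework: the language of set theory, Lévy hierarchy,
Σₙ-elementarity of classes of `ZFSet`s, cumulative hierarchy, etc. -/

open FirstOrder

/-- The language of set theory: a single binary relation symbol (membership). -/
def LSet : FirstOrder.Language where
  Functions _ := Empty
  Relations n := match n with
    | 2 => Unit
    | _ => Empty

/-- `V` (the universe of ZFC sets) as an `LSet`-structure. -/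
noncomputable instance : LSet.Structure ZFSet where
  funMap := fun f _ => f.elim
  RelMap := fun {n} r xs => match n, r, xs with
    | 2, _, xs => xs 0 ∈ xs 1
    | 0, r, _ => r.elim
    | 1, r, _ => r.elim
    | _+3, r, _ => r.elim

/-- Any class of sets as an `LSet`-structure, with the inherited membership relation. -/
noncomputable instance (S : Set ZFSet) : LSet.Structure S where
  funMap := fun f _ => f.elim
  RelMap := fun {n} r xs => match n, r, xs with
    | 2, _, xs => (xs 0 : ZFSet) ∈ (xs 1 : ZFSet)
    | 0, r, _ => r.elim
    | 1, r, _ => r.elim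
    | _+3, r, _ => r.elim

mutual
  /-- The Σₙ formulas of the Lévy-style prenex hierarchy. -/
  inductive IsSigmaFml : ℕ → ∀ {k : ℕ}, LSet.BoundedFormula Empty k → Prop
    | of_qf {k} {φ : LSet.BoundedFormula Empty k} : φ.IsQF → IsSigmaFml 0 φ
    | of_pi {n k} {φ : LSet.BoundedFormula Empty k} : IsPiFml n φ → IsSigmaFml (n+1) φ
    | ex {n k} {φ : LSet.BoundedFormula Empty (k+1)} :
        IsSigmaFml (n+1) φ → IsSigmaFml (n+1) φ.ex
  /-- The Πₙ formulas of the Lévy-style prenex hierarchy. -/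
  inductive IsPiFml : ℕ → ∀ {k : ℕ}, LSet.BoundedFormula Empty k → Prop
    | of_qf {k} {φ : LSet.BoundedFormula Empty k} : φ.IsQF → IsPiFml 0 φ
    | of_sigma {n k} {φ : LSet.BoundedFormula Empty k} : IsSigmaFml n φ → IsPiFml (n+1) φ
    | all {n k} {φ : LSet.BoundedFormula Empty (k+1)} :
        IsPiFml (n+1) φ → IsPiFml (n+1) φ.all
end

/-- Satisfaction of a formula (with `k` parameters) in `V`. -/
def SatV {k : ℕ} (φ : LSet.BoundedFormula Empty k) (xs : Fin k → ZFSet) : Prop :=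
  φ.Realize (fun e => e.elim) xs

/-- Satisfaction of a formula (with `k` parameters) in a class `S` of sets. -/
def SatIn (S : Set ZFSet) {k : ℕ} (φ : LSet.BoundedFormula Empty k) (xs : Fin k → S) : Prop :=
  φ.Realize (fun e => e.elim) xs

/-- `S ≼ₙ V` : Σₙ formulas with parameters in `S` are absolute between `S` and `V`. -/
def SigmaElementary (n : ℕ) (S : Set ZFSet) : Prop :=
  ∀ {k : ℕ} (φ : LSet.BoundedFormula Empty k), IsSigmaFml n φ →
    ∀ xs : Fin k → S, (SatIn S φ xs ↔ SatV φ (fun i => (xs i : ZFSet)))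

/-- The cumulative hierarchy `V_α`, as the class of sets of rank `< α`. -/
def Vset (α : Ordinal) : Set ZFSet := {x | x.rank < α}

universe u

/-- `H_κ`: the class of sets hereditarily of cardinality `< κ`. -/
def Hset (κ : Cardinal.{u}) : Set ZFSet.{u} :=
  {x | ∃ t : ZFSet, t.IsTransitive ∧ x ⊆ t ∧ Cardinal.mk t.toSet < Cardinal.lift.{u+1} κ}

/-- The class `C⁽ⁿ⁾ = {α : V_α ≼ₙ V}`. -/
def Cclass (n : ℕ) : Set Ordinal := {α | SigmaElementary n (Vset α)}

/-- `x` is a (von Neumann) ordinal: a transitive set of transitive sets. -/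
def ZFOrd (x : ZFSet) : Prop := x.IsTransitive ∧ ∀ y ∈ x, ZFSet.IsTransitive y

/-- A transitive class of sets. -/
def TransClass (M : Set ZFSet) : Prop := ∀ x ∈ M, ∀ y, y ∈ x → y ∈ M

/-- `j` is an elementary embedding of `V` into the class `M`. -/
structure ElemEmbV (M : Set ZFSet) (j : ZFSet → ZFSet) : Prop where
  maps : ∀ x, j x ∈ M
  elem : ∀ {k : ℕ} (φ : LSet.BoundedFormula Empty k) (xs : Fin k → ZFSet),
    SatV φ xs ↔ SatIn M φ (fun i => ⟨j (xs i), maps (xs i)⟩)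

/-- `j` is an elementary embedding of the class `S` into the class `T`. -/
structure ElemEmbBetween (S T : Set ZFSet) (j : ZFSet → ZFSet) : Prop where
  maps : ∀ x ∈ S, j x ∈ T
  elem : ∀ {k : ℕ} (φ : LSet.BoundedFormula Empty k) (xs : Fin k → ZFSet) (h : ∀ i, xs i ∈ S),
    SatIn S φ (fun i => ⟨xs i, h i⟩) ↔ SatIn T φ (fun i => ⟨j (xs i), maps _ (h i)⟩)

/-- `κ` is the critical point of `j`: `j` fixes all ordinals `< κ` and moves `κ`. -/
def IsCritPt (j : ZFSet → ZFSet) (κ : ZFSet) : Prop :=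
  ZFOrd κ ∧ (∀ x, x ∈ κ → j x = x) ∧ j κ ≠ κ

/-- An ultrafilter on (all subsets of) the set `base`. -/
structure ZFUltra (base : ZFSet) where
  sets : Set ZFSet
  sub : ∀ X ∈ sets, X ⊆ base
  base_mem : base ∈ sets
  empty_not_mem : (∅ : ZFSet) ∉ sets
  upward : ∀ X ∈ sets, ∀ Y, Y ⊆ base → X ⊆ Y → Y ∈ sets
  ultra : ∀ X, X ⊆ base → (X ∈ sets ∨ ZFSet.sep (fun y => y ∉ X) base ∈ sets)

/-- `κ`-completeness: any family of fewer than `|κ|` many members has its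
intersection (with the base) in the ultrafilter. -/
def ZFUltra.Complete {b : ZFSet} (κ : ZFSet) (U : ZFUltra b) : Prop :=
  ∀ F : Set ZFSet, F ⊆ U.sets → Cardinal.mk F < Cardinal.mk κ.toSet →
    ZFSet.sep (fun x => ∀ X ∈ F, x ∈ X) b ∈ U.sets

/-- Nonprincipality: the complement of every singleton is in the ultrafilter. -/
def ZFUltra.Nonprincipal {b : ZFSet} (U : ZFUltra b) : Prop :=
  ∀ x, ZFSet.sep (fun y => y ≠ x) b ∈ U.sets

/-- Normality for an ultrafilter on an ordinal `κ`: closure under diagonal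
intersections. -/
def ZFUltra.NormalOn (κ : ZFSet) (U : ZFUltra κ) : Prop :=
  ∀ A : ZFSet → ZFSet, (∀ α ∈ κ, A α ∈ U.sets) →
    ZFSet.sep (fun α => ∀ β ∈ α, α ∈ A β) κ ∈ U.sets

/-- `P_κ(γ)`: the set of subsets of `γ` of cardinality `< |κ|`. -/
noncomputable def Pkappa (κ γ : ZFSet) : ZFSet :=
  ZFSet.sep (fun x => Cardinal.mk x.toSet < Cardinal.mk κ.toSet) (ZFSet.powerset γ)

/-- Fineness for an ultrafilter on `P_κ(γ)`. -/
def ZFUltra.Fine (κ γ : ZFSet) (U : ZFUltra (Pkappa κ γ)) : Prop :=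
  ∀ a ∈ γ, ZFSet.sep (fun x => a ∈ x) (Pkappa κ γ) ∈ U.sets

/-- Normality for an ultrafilter on `P_κ(γ)`: closure under diagonal intersections. -/
def ZFUltra.NormalP (κ γ : ZFSet) (U : ZFUltra (Pkappa κ γ)) : Prop :=
  ∀ A : ZFSet → ZFSet, (∀ a ∈ γ, A a ∈ U.sets) →
    ZFSet.sep (fun x => ∀ a ∈ x, x ∈ A a) (Pkappa κ γ) ∈ U.sets

/-- `κ` is `γ`-supercompact: there is a `κ`-complete fine normal ultrafilter on `P_κ(γ)`. -/
def GammaSupercompact (κ γ : ZFSet) : Prop :=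
  ∃ U : ZFUltra (Pkappa κ γ), U.Complete κ ∧ U.Fine κ γ ∧ U.NormalP κ γ

/-- `κ` is supercompact. -/
def Supercompact (κ : ZFSet) : Prop :=
  ZFOrd κ ∧ ∀ γ : ZFSet, ZFOrd γ → GammaSupercompact κ γ

/-- `κ` is measurable: it carries a `κ`-complete nonprincipal ultrafilter. -/
def ZFMeasurable (κ : ZFSet) : Prop :=
  ZFOrd κ ∧ ∃ U : ZFUltra κ, U.Complete κ ∧ U.Nonprincipal

/-- `κ` is `λ`-strong. -/
def LambdaStrong (κ : ZFSet) (lam : Ordinal) : Prop :=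
  ∃ (M : Set ZFSet) (j : ZFSet → ZFSet), TransClass M ∧ ElemEmbV M j ∧ IsCritPt j κ ∧
    lam < (j κ).rank ∧ (∀ x, x.rank < lam → x ∈ M)

/-- `κ` is `λ`-`C⁽ⁿ⁾`-strong. -/
def LambdaCnStrong (n : ℕ) (κ : ZFSet) (lam : Ordinal) : Prop :=
  ∃ (M : Set ZFSet) (j : ZFSet → ZFSet), TransClass M ∧ ElemEmbV M j ∧ IsCritPt j κ ∧
    lam < (j κ).rank ∧ (∀ x, x.rank < lam → x ∈ M) ∧ (j κ).rank ∈ Cclass n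

/-- `κ` is superstrong. -/
def Superstrong (κ : ZFSet) : Prop :=
  ∃ (M : Set ZFSet) (j : ZFSet → ZFSet), TransClass M ∧ ElemEmbV M j ∧ IsCritPt j κ ∧
    (∀ x, x.rank < (j κ).rank → x ∈ M)

/-- `κ` is `C⁽ⁿ⁾`-superstrong. -/
def CnSuperstrong (n : ℕ) (κ : ZFSet) : Prop :=
  ∃ (M : Set ZFSet) (j : ZFSet → ZFSet), TransClass M ∧ ElemEmbV M j ∧ IsCritPt j κ ∧
    (∀ x, x.rank < (j κ).rank → x ∈ M) ∧ (j κ).rank ∈ Cclass n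

/-- `κ` is `λ`-`C⁽ⁿ⁾`-extendible. -/
def LamCnExtendible (n : ℕ) (κ : ZFSet) (lam : Ordinal) : Prop :=
  ∃ (μ : Ordinal) (j : ZFSet → ZFSet), ElemEmbBetween (Vset lam) (Vset μ) j ∧
    IsCritPt j κ ∧ lam < (j κ).rank ∧ (j κ).rank ∈ Cclass n

/-- `κ` is `C⁽ⁿ⁾`-extendible. -/
def CnExtendible (n : ℕ) (κ : ZFSet) : Prop :=
  ∀ lam : Ordinal, κ.rank < lam → LamCnExtendible n κ lam

/-- `κ` is extendible. -/
def Extendible (κ : ZFSet) : Prop :=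
  ∀ lam : Ordinal, κ.rank < lam →
    ∃ (μ : Ordinal) (j : ZFSet → ZFSet), ElemEmbBetween (Vset lam) (Vset μ) j ∧
      IsCritPt j κ ∧ lam < (j κ).rank
/-- The language of set theory with one additional unary relation symbol. -/
def L2 : FirstOrder.Language where
  Functions _ := Empty
  Relations n := match n with
    | 1 => Unit
    | 2 => Unit
    | _ => Empty

/-- A structure for `L2` coded by sets: a domain, a binary relation (a set of
ordered pairs) and a unary predicate (a subset of the domain). -/
structure PreStruct where
  dom : ZFSet
  rel : ZFSet
  un : ZFSet

/-- The set coding a `PreStruct`. -/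
noncomputable def PreStruct.code (A : PreStruct) : ZFSet :=
  ZFSet.pair A.dom (ZFSet.pair A.rel A.un)

/-- The `L2`-structure on the domain of a `PreStruct`. -/
noncomputable def L2Str (A : PreStruct) : L2.Structure (↥A.dom.toSet) where
  funMap := fun f _ => f.elim
  RelMap := fun {n} r xs => match n, r, xs with
    | 1, _, xs => (xs 0 : ZFSet) ∈ A.un
    | 2, _, xs => ZFSet.pair (xs 0 : ZFSet) (xs 1 : ZFSet) ∈ A.rel
    | 0, r, _ => r.elim
    | _+3, r, _ => r.elim

/-- Satisfaction in a coded structure. -/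
def SatStruct (A : PreStruct) {k : ℕ} (φ : L2.BoundedFormula Empty k)
    (xs : Fin k → ↥A.dom.toSet) : Prop :=
  @FirstOrder.Language.BoundedFormula.Realize L2 _ (L2Str A) Empty k φ (fun e => e.elim) xs

/-- `e` is an elementary embedding of the coded structure `A` into `B`. -/
structure StructEmb (A B : PreStruct) (e : ZFSet → ZFSet) : Prop where
  maps : ∀ x ∈ A.dom, e x ∈ B.dom
  elem : ∀ {k : ℕ} (φ : L2.BoundedFormula Empty k) (xs : Fin k → ZFSet)
      (h : ∀ i, xs i ∈ A.dom),
    SatStruct A φ (fun i => ⟨xs i, h i⟩) ↔ SatStruct B φ (fun i => ⟨e (xs i), maps _ (h i)⟩)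

/-- `A` is elementarily embeddable into `B`. -/
def ElemEmbeddable (A B : PreStruct) : Prop := ∃ e : ZFSet → ZFSet, StructEmb A B e

/-!
Choose a transitive set `t` of size `< κ` with `p ⊆ t`, and let `N` be the closure of
`t ∪ {p, B.dom, B.rel, B.un}` under Skolem functions for `V` and for `B`. Then `|N| < κ`, `N ≺ V`
(so `N` is extensional and closed under pairs) and `B.dom ∩ N ≺ B`. The Mostowski collapse `π` of
`N` is an `∈`-isomorphism onto the transitive class `π[N]`, of size `< κ`, and fixes `t` pointwise.
Hence `A := π(B)` lies in `H_κ`, `π⁻¹` is an elementary embedding of `A` into `B`, and the Σ₁ fact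
`φ(B, p)` reflects to `N`, is carried by `π` to `φ(A, p)` in `π[N]`, and holds in `V` by upward
absoluteness, i.e. `A ∈ 𝒞`.
-/

open FirstOrder.Language

theorem LSet.arity_eq_two {n : ℕ} (r : LSet.Relations n) : n = 2 :=
  match n, r with
  | 2, _ => rfl

theorem L2.arity_eq_one_or_two {n : ℕ} (r : L2.Relations n) : n = 1 ∨ n = 2 :=
  match n, r with
  | 1, _ => .inl rfl
  | 2, _ => .inr rfl

instance LSet.countable_symbols : Countable LSet.Symbols := by
  have (n : ℕ) : Countable (LSet.Relations n) := match n with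
    | 2 => inferInstanceAs (Countable Unit)
    | 0 | 1 | _ + 3 => inferInstanceAs (Countable Empty)
  have (n : ℕ) : Countable (LSet.Functions n) := inferInstanceAs (Countable Empty)
  exact inferInstanceAs (Countable ((Σ n, LSet.Functions n) ⊕ Σ n, LSet.Relations n))

instance L2.countable_symbols : Countable L2.Symbols := by
  have (n : ℕ) : Countable (L2.Relations n) := match n with
    | 1 | 2 => inferInstanceAs (Countable Unit)
    | 0 | _ + 3 => inferInstanceAs (Countable Empty)
  have (n : ℕ) : Countable (L2.Functions n) := inferInstanceAs (Countable Empty)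
  exact inferInstanceAs (Countable ((Σ n, L2.Functions n) ⊕ Σ n, L2.Relations n))

theorem countable_skolem₁_functions (L : FirstOrder.Language) [Countable L.Symbols] (n : ℕ) :
    Countable (L.skolem₁.Functions n) :=
  (sigma_mk_injective (i := n + 1) (β := L.BoundedFormula Empty)).countable

def LSet.mem {n : ℕ} (t₁ t₂ : LSet.Term (Empty ⊕ Fin n)) : LSet.BoundedFormula Empty n :=
  (show LSet.Relations 2 from ()).boundedFormula₂ t₁ t₂

@[simp]
theorem LSet.realize_mem {n : ℕ} (t₁ t₂ : LSet.Term (Empty ⊕ Fin n)) (v : Empty → ZFSet)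
    (xs : Fin n → ZFSet) :
    (LSet.mem t₁ t₂).Realize v xs ↔ t₁.realize (Sum.elim v xs) ∈ t₂.realize (Sum.elim v xs) :=
  Iff.rfl

def LSet.subtypeEmbedding (S : Set ZFSet) : S ↪[LSet] ZFSet where
  toFun := Subtype.val
  inj' := Subtype.val_injective
  map_fun' f := Empty.elim f
  map_rel' r _ := by
    obtain rfl := LSet.arity_eq_two r
    exact Iff.rfl

theorem satV_iff_realize {k : ℕ} (φ : LSet.BoundedFormula Empty k) (v : Empty → ZFSet)
    (xs : Fin k → ZFSet) : SatV φ xs ↔ φ.Realize v xs := by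
  rw [Subsingleton.elim v fun e => e.elim]; rfl

theorem satIn_iff_realize (S : Set ZFSet) {k : ℕ} (φ : LSet.BoundedFormula Empty k)
    (v : Empty → S) (xs : Fin k → S) : SatIn S φ xs ↔ φ.Realize v xs := by
  rw [Subsingleton.elim v fun e => e.elim]; rfl

theorem IsSigmaFml.isExistential {k : ℕ} {φ : LSet.BoundedFormula Empty k}
    (h : IsSigmaFml 1 φ) : φ.IsExistential :=
  IsSigmaFml.rec
    (motive_1 := fun n _ φ _ => n = 1 → φ.IsExistential)
    (motive_2 := fun n _ φ _ => n = 0 → φ.IsQF)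
    (fun _ h => by cases h) (fun _ ih h => (ih (by omega)).isExistential)
    (fun _ ih h => (ih h).ex) (fun h _ => h) (fun _ _ h => by cases h)
    (fun _ _ h => by cases h) h rfl

theorem SatIn.satV_of_isSigmaFml {S : Set ZFSet} {k : ℕ} {φ : LSet.BoundedFormula Empty k}
    (hφ : IsSigmaFml 1 φ) {xs : Fin k → S} (h : SatIn S φ xs) : SatV φ (Subtype.val ∘ xs) :=
  (satV_iff_realize _ _ _).2 (hφ.isExistential.realize_embedding (LSet.subtypeEmbedding S) h)

namespace ZFSet

noncomputable def collapse (N : Set ZFSet) (x : ZFSet) : ZFSet :=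
  range fun y : ZFSet.sep (· ∈ N) x => collapse N y
termination_by x
decreasing_by exact (mem_sep.1 y.2).1

def IsExtensional (N : Set ZFSet) : Prop :=
  ∀ x ∈ N, ∀ y ∈ N, (∀ z ∈ N, z ∈ x ↔ z ∈ y) → x = y

def IsPairClosed (N : Set ZFSet) : Prop :=
  ∀ x ∈ N, ∀ y ∈ N, ({x, y} : ZFSet) ∈ N

variable {N : Set ZFSet}

theorem mem_collapse {x z : ZFSet} : z ∈ collapse N x ↔ ∃ y ∈ x, y ∈ N ∧ collapse N y = z := by
  rw [collapse, mem_range]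
  simp only [Subtype.exists, mem_sep, exists_prop, and_assoc]

theorem collapse_mem_collapse {x y : ZFSet} (hy : y ∈ x) (hyN : y ∈ N) :
    collapse N y ∈ collapse N x :=
  mem_collapse.2 ⟨y, hy, hyN, rfl⟩

theorem IsExtensional.injOn_collapse (hN : IsExtensional N) : Set.InjOn (collapse N) N := by
  intro x hx y hy hxy
  induction x using inductionOn generalizing y with
  | h x ih =>
    refine hN x hx y hy fun z hz => ⟨fun hzx => ?_, fun hzy => ?_⟩
    · obtain ⟨w, hwy, hwN, hwz⟩ := mem_collapse.1 (hxy ▸ collapse_mem_collapse hzx hz)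
      exact ih z hzx hz hwN hwz.symm ▸ hwy
    · obtain ⟨w, hwx, hwN, hwz⟩ := mem_collapse.1 (hxy ▸ collapse_mem_collapse hzy hz)
      exact ih w hwx hwN hz hwz ▸ hwx

theorem IsExtensional.collapse_mem_collapse_iff (hN : IsExtensional N) {x y : ZFSet}
    (hy : y ∈ N) : collapse N y ∈ collapse N x ↔ y ∈ x := by
  refine ⟨fun h => ?_, fun h => collapse_mem_collapse h hy⟩
  obtain ⟨w, hwx, hwN, hwy⟩ := mem_collapse.1 h
  exact hN.injOn_collapse hwN hy hwy ▸ hwx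

theorem collapse_eq_self {t : ZFSet} (ht : t.IsTransitive) (htN : t.toSet ⊆ N) {x : ZFSet}
    (hx : x ⊆ t) : collapse N x = x := by
  induction x using inductionOn with
  | h x ih =>
    ext z
    rw [mem_collapse]
    constructor
    · rintro ⟨y, hyx, -, rfl⟩
      rwa [ih y hyx (ht.subset_of_mem (hx hyx))]
    · exact fun hz => ⟨z, hz, htN (hx hz), ih z hz (ht.subset_of_mem (hx hz))⟩

theorem collapse_unorderedPair {x y : ZFSet} (hx : x ∈ N) (hy : y ∈ N) :
    collapse N {x, y} = {collapse N x, collapse N y} := by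
  ext z
  simp only [mem_collapse, mem_pair]
  constructor
  · rintro ⟨w, rfl | rfl, -, rfl⟩
    exacts [.inl rfl, .inr rfl]
  · rintro (rfl | rfl)
    exacts [⟨x, .inl rfl, hx, rfl⟩, ⟨y, .inr rfl, hy, rfl⟩]

theorem IsPairClosed.pair_mem (hN : IsPairClosed N) {x y : ZFSet} (hx : x ∈ N) (hy : y ∈ N) :
    pair x y ∈ N :=
  hN _ (pair_eq_singleton x ▸ hN x hx x hx) _ (hN x hx y hy)

theorem IsPairClosed.collapse_pair (hN : IsPairClosed N) {x y : ZFSet} (hx : x ∈ N)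
    (hy : y ∈ N) : collapse N (pair x y) = pair (collapse N x) (collapse N y) := by
  rw [pair, ← pair_eq_singleton, collapse_unorderedPair (hN x hx x hx) (hN x hx y hy),
    collapse_unorderedPair hx hx, collapse_unorderedPair hx hy, pair_eq_singleton, pair]

theorem transClass_image_collapse (N : Set ZFSet) : TransClass (collapse N '' N) := by
  rintro _ ⟨x, -, rfl⟩ z hz
  obtain ⟨y, -, hyN, rfl⟩ := mem_collapse.1 hz
  exact ⟨y, hyN, rfl⟩

noncomputable def IsExtensional.collapseEquiv (hN : IsExtensional N) :
    N ≃[LSet] collapse N '' N where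
  toEquiv := Equiv.Set.imageOfInjOn _ _ hN.injOn_collapse
  map_fun' f := Empty.elim f
  map_rel' r xs := by
    obtain rfl := LSet.arity_eq_two r
    exact hN.collapse_mem_collapse_iff (xs 0).2

end ZFSet

theorem satV_collapse_of_isSigmaFml {N : Set ZFSet} (hN : SigmaElementary 1 N)
    (hext : ZFSet.IsExtensional N) {k : ℕ} {φ : LSet.BoundedFormula Empty k}
    (hφ : IsSigmaFml 1 φ) {xs : Fin k → ZFSet} (hxs : ∀ i, xs i ∈ N) (h : SatV φ xs) :
    SatV φ (ZFSet.collapse N ∘ xs) := by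
  have hsatN : SatIn N φ fun i => ⟨xs i, hxs i⟩ := (hN φ hφ _).2 h
  have hsatM : SatIn (ZFSet.collapse N '' N) φ (hext.collapseEquiv ∘ fun i => ⟨xs i, hxs i⟩) :=
    (satIn_iff_realize _ _ (hext.collapseEquiv ∘ fun e => e.elim) _).2
      ((StrongHomClass.realize_boundedFormula _ φ).2 ((satIn_iff_realize _ _ _ _).1 hsatN))
  exact hsatM.satV_of_isSigmaFml hφ

theorem mem_Hset_of_mem_transClass {κ : Cardinal.{u}} {M : Set ZFSet.{u}} (hM : TransClass M)
    (hMκ : Cardinal.mk M < Cardinal.lift.{u + 1} κ) {x : ZFSet.{u}} (hx : x ∈ M) :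
    x ∈ Hset κ := by
  have : Small.{u} M := by
    rw [Cardinal.small_iff_lift_mk_lt_univ, Cardinal.lift_id]
    exact hMκ.trans (Cardinal.lift_lt_univ κ)
  set t := ZFSet.range (Subtype.val : M → ZFSet)
  have ht : ∀ y, y ∈ t ↔ y ∈ M := fun y =>
    ZFSet.mem_range.trans ⟨fun ⟨i, hi⟩ => hi ▸ i.2, fun hy => ⟨⟨y, hy⟩, rfl⟩⟩
  refine ⟨t, fun y hy z hz => (ht z).2 (hM y ((ht y).1 hy) z hz),
    fun y hy => (ht y).2 (hM x hx y hy), ?_⟩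
  rwa [show t.toSet = M from Set.ext ht]

def IsTarskiVaughtV (N : Set ZFSet) : Prop :=
  ∀ ⦃n⦄ (ψ : LSet.BoundedFormula Empty (n + 1)) (xs : Fin n → ZFSet), (∀ i, xs i ∈ N) →
    ∀ a, SatV ψ (Fin.snoc xs a) → ∃ b ∈ N, SatV ψ (Fin.snoc xs b)

namespace IsTarskiVaughtV

variable {N : Set ZFSet.{u}}

theorem sigmaElementary (hN : IsTarskiVaughtV N) (n : ℕ) : SigmaElementary n N := by
  let f : N ↪ₑ[LSet] ZFSet.{u} :=
    (LSet.subtypeEmbedding N).toElementaryEmbedding fun _ φ xs a ha =>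
      let ⟨b, hbN, hb⟩ := hN φ _ (fun i => (xs i).2) a ((satV_iff_realize _ _ _).2 ha)
      ⟨⟨b, hbN⟩, (satV_iff_realize _ _ _).1 hb⟩
  intro k φ _ xs
  exact (f.map_boundedFormula φ _ xs).symm.trans (satV_iff_realize _ _ _).symm

theorem isExtensional (hN : IsTarskiVaughtV N) : ZFSet.IsExtensional N := by
  intro x hx y hy hxy
  by_contra hne
  obtain ⟨z, hz⟩ : ∃ z, ¬(z ∈ x ↔ z ∈ y) := by
    by_contra! h
    exact hne (ZFSet.ext h)
  obtain ⟨w, hwN, hw⟩ := hN (∼(LSet.mem (&2) (&0) ⇔ LSet.mem (&2) (&1))) ![x, y]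
    (fun i => by fin_cases i <;> assumption) z (by simpa [SatV] using hz)
  simp only [SatV, Fin.isValue, Function.comp_apply, Matrix.Fin.snoc_vecCons,
    Matrix.Fin.snoc_vecEmpty, BoundedFormula.realize_not, BoundedFormula.realize_iff,
    LSet.realize_mem, Term.realize_var, Sum.elim_inr, Matrix.cons_val_zero, Matrix.cons_val,
    Matrix.cons_val_one] at hw
  exact hw (hxy w hwN)

theorem isPairClosed (hN : IsTarskiVaughtV N) : ZFSet.IsPairClosed N := by
  intro x hx y hy
  obtain ⟨w, hwN, hw⟩ := hN (∀' (LSet.mem (&3) (&2) ⇔ (&3 =' &0 ⊔ &3 =' &1))) ![x, y]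
    (fun i => by fin_cases i <;> assumption) {x, y} (by simp [SatV])
  simp only [SatV, Fin.isValue, Function.comp_apply, Matrix.Fin.snoc_vecCons,
    Matrix.Fin.snoc_vecEmpty, BoundedFormula.realize_all, BoundedFormula.realize_iff,
    LSet.realize_mem, Term.realize_var, Sum.elim_inr, Matrix.cons_val, BoundedFormula.realize_sup,
    BoundedFormula.realize_bdEqual, Matrix.cons_val_zero, Matrix.cons_val_one] at hw
  convert hwN
  ext z
  rw [hw, ZFSet.mem_pair]

end IsTarskiVaughtV

namespace PreStruct

noncomputable def collapse (B : PreStruct) (N : Set ZFSet) : PreStruct :=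
  ⟨ZFSet.collapse N B.dom, ZFSet.collapse N B.rel, ZFSet.collapse N B.un⟩

theorem code_collapse {B : PreStruct} {N : Set ZFSet} (hN : ZFSet.IsPairClosed N)
    (hdom : B.dom ∈ N) (hrel : B.rel ∈ N) (hun : B.un ∈ N) :
    (B.collapse N).code = ZFSet.collapse N B.code := by
  rw [code, code, hN.collapse_pair hdom (hN.pair_mem hrel hun), hN.collapse_pair hrel hun]
  rfl

section

attribute [local instance] L2Str

theorem elemEmbeddable_of_elementaryEmbedding {A B : PreStruct}
    (f : A.dom.toSet ↪ₑ[L2] B.dom.toSet) : ElemEmbeddable A B := by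
  classical
  refine ⟨fun x => if h : x ∈ A.dom then f ⟨x, h⟩ else x, ⟨fun x hx => by simp [hx], ?_⟩⟩
  intro k φ xs hxs
  have hv : (fun e : Empty => e.elim : Empty → B.dom.toSet) = f ∘ fun e => e.elim :=
    Subsingleton.elim _ _
  rw [SatStruct, SatStruct, hv, ← f.map_boundedFormula]
  refine Iff.of_eq (congrArg _ (funext fun i => Subtype.ext ?_))
  simp [hxs i]

def IsTarskiVaught (B : PreStruct) (N : Set ZFSet) : Prop :=
  ∀ ⦃n⦄ (θ : L2.BoundedFormula Empty (n + 1)) (xs : Fin n → B.dom.toSet),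
    (∀ i, (xs i : ZFSet) ∈ N) → ∀ a, θ.Realize default (Fin.snoc xs a) →
      ∃ b : B.dom.toSet, (b : ZFSet) ∈ N ∧ θ.Realize default (Fin.snoc xs b)

variable {B : PreStruct} {N : Set ZFSet}

theorem exists_collapse_eq {z : ZFSet} (hz : z ∈ (B.collapse N).dom) :
    ∃ y ∈ B.dom.toSet ∩ N, ZFSet.collapse N y = z := by
  obtain ⟨y, hy, hyN, rfl⟩ := ZFSet.mem_collapse.1 hz
  exact ⟨y, ⟨hy, hyN⟩, rfl⟩

noncomputable def uncollapse (B : PreStruct) (N : Set ZFSet) (z : (B.collapse N).dom.toSet) :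
    B.dom.toSet :=
  ⟨Function.invFunOn (ZFSet.collapse N) (B.dom.toSet ∩ N) z,
    (Function.invFunOn_mem (exists_collapse_eq z.2)).1⟩

theorem uncollapse_mem (z : (B.collapse N).dom.toSet) : (B.uncollapse N z : ZFSet) ∈ N :=
  (Function.invFunOn_mem (exists_collapse_eq z.2)).2

theorem collapse_uncollapse (z : (B.collapse N).dom.toSet) :
    ZFSet.collapse N (B.uncollapse N z) = z :=
  Function.invFunOn_eq (exists_collapse_eq z.2)

noncomputable def uncollapseEmbedding (hN : ZFSet.IsExtensional N)
    (hpair : ZFSet.IsPairClosed N) : (B.collapse N).dom.toSet ↪[L2] B.dom.toSet where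
  toFun := B.uncollapse N
  inj' x y h := Subtype.ext <| by rw [← collapse_uncollapse x, ← collapse_uncollapse y, h]
  map_fun' f := Empty.elim f
  map_rel' r xs := by
    rcases L2.arity_eq_one_or_two r with rfl | rfl
    · change (B.uncollapse N (xs 0) : ZFSet) ∈ B.un ↔ (xs 0 : ZFSet) ∈ ZFSet.collapse N B.un
      rw [← collapse_uncollapse (xs 0), hN.collapse_mem_collapse_iff (uncollapse_mem _)]
    · change ZFSet.pair (B.uncollapse N (xs 0)) (B.uncollapse N (xs 1)) ∈ B.rel ↔
        ZFSet.pair (xs 0 : ZFSet) (xs 1) ∈ ZFSet.collapse N B.rel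
      rw [← collapse_uncollapse (xs 0), ← collapse_uncollapse (xs 1),
        ← hpair.collapse_pair (uncollapse_mem _) (uncollapse_mem _),
        hN.collapse_mem_collapse_iff (hpair.pair_mem (uncollapse_mem _) (uncollapse_mem _))]

theorem elemEmbeddable_collapse (hN : ZFSet.IsExtensional N) (hpair : ZFSet.IsPairClosed N)
    (hB : B.IsTarskiVaught N) : ElemEmbeddable (B.collapse N) B := by
  refine elemEmbeddable_of_elementaryEmbedding
    ((uncollapseEmbedding hN hpair).toElementaryEmbedding fun n θ xs a ha => ?_)
  obtain ⟨b, hbN, hb⟩ :=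
    hB θ (uncollapseEmbedding hN hpair ∘ xs) (fun i => uncollapse_mem (xs i)) a ha
  refine ⟨⟨ZFSet.collapse N b, ZFSet.collapse_mem_collapse b.2 hbN⟩, ?_⟩
  convert hb
  exact Subtype.ext (hN.injOn_collapse (uncollapse_mem _) hbN (collapse_uncollapse _))

/-- Skolem functions of `B`, taking arbitrary sets as arguments: `funMap θ xs` is a witness
`a ∈ B.dom` for `θ(xs, a)` when `xs` lies in `B.dom` and such a witness exists, and an
unspecified set otherwise. -/
@[reducible]
noncomputable def skolemStructure (B : PreStruct) : L2.skolem₁.Structure ZFSet where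
  funMap {n} θ xs := Classical.epsilon fun a => ∃ ys : Fin (n + 1) → B.dom.toSet,
    Subtype.val ∘ ys = Fin.snoc xs a ∧ (θ : L2.BoundedFormula Empty (n + 1)).Realize default ys
  RelMap r := Empty.elim r

noncomputable def hull (B : PreStruct) (s : Set ZFSet) : Set ZFSet :=
  letI := B.skolemStructure
  Substructure.closure (LSet.skolem₁.sum L2.skolem₁) s

variable (B) (s : Set ZFSet)

theorem subset_hull : s ⊆ B.hull s :=
  letI := B.skolemStructure
  Substructure.subset_closure

theorem mk_hull_le : Cardinal.mk (B.hull s) ≤ max Cardinal.aleph0 (Cardinal.mk s) := by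
  let _ := B.skolemStructure
  have : Countable (Σ n, (LSet.skolem₁.sum L2.skolem₁).Functions n) := by
    have (n : ℕ) := countable_skolem₁_functions LSet n
    have (n : ℕ) := countable_skolem₁_functions L2 n
    exact inferInstanceAs (Countable (Σ n, LSet.skolem₁.Functions n ⊕ L2.skolem₁.Functions n))
  have h := Substructure.lift_card_closure_le (L := LSet.skolem₁.sum L2.skolem₁) (s := s)
  rw [Cardinal.lift_uzero, Cardinal.lift_uzero] at h
  refine h.trans (max_le (le_max_left _ _) ?_)
  have : Cardinal.lift.{1} (Cardinal.mk (Σ n, (LSet.skolem₁.sum L2.skolem₁).Functions n)) ≤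
      Cardinal.aleph0 :=
    Cardinal.lift_le_aleph0.2 Cardinal.mk_le_aleph0
  calc _ ≤ Cardinal.mk s + Cardinal.aleph0 := by gcongr
    _ ≤ max (max (Cardinal.mk s) Cardinal.aleph0) Cardinal.aleph0 := Cardinal.add_le_max _ _
    _ = max Cardinal.aleph0 (Cardinal.mk s) := by rw [max_assoc, max_self, max_comm]

theorem isTarskiVaughtV_hull : IsTarskiVaughtV (B.hull s) := by
  let _ := B.skolemStructure
  intro n ψ xs hxs a ha
  refine ⟨_, (Substructure.closure _ s).fun_mem (Sum.inl ψ) xs hxs, ?_⟩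
  convert Classical.epsilon_spec (p := fun b => SatV ψ (Fin.snoc xs b)) ⟨a, ha⟩ using 2
  exact congrArg Classical.epsilon (funext fun b => propext (satV_iff_realize _ _ _).symm)

theorem isTarskiVaught_hull : B.IsTarskiVaught (B.hull s) := by
  let _ := B.skolemStructure
  intro n θ xs hxs a ha
  have hmem := (Substructure.closure _ s).fun_mem (Sum.inr θ) (Subtype.val ∘ xs) hxs
  obtain ⟨ys, hys, hθ⟩ := Classical.epsilon_spec (p := fun b => ∃ ys : Fin (n + 1) → B.dom.toSet,
    Subtype.val ∘ ys = Fin.snoc (Subtype.val ∘ xs) b ∧ θ.Realize default ys)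
    ⟨a, Fin.snoc xs a, Fin.comp_snoc _ _ _, ha⟩
  have hinit : Fin.init ys = xs :=
    funext fun i => Subtype.ext (by simpa [Fin.init] using congrFun hys i.castSucc)
  have hlast := congrFun hys (Fin.last n)
  simp only [Function.comp_apply, Fin.snoc_last] at hlast
  refine ⟨ys (Fin.last n), ?_, by rwa [← hinit, Fin.snoc_init_self]⟩
  rw [hlast]
  exact hmem

end

end PreStruct

/-- If `κ` is an uncountable cardinal, every Σ₁-definable (with parameters in
`H_κ`) class of structures of the same type reflects below `κ`. -/
theorem stmt16 (κ : Cardinal) (hκ : Cardinal.aleph0 < κ)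
    (𝒞 : Set ZFSet) (hstr : ∀ X ∈ 𝒞, ∃ A : PreStruct, X = A.code)
    (φ : LSet.BoundedFormula Empty 2) (hφ : IsSigmaFml 1 φ)
    (p : ZFSet) (hp : p ∈ Hset κ)
    (hdef : ∀ X : ZFSet, X ∈ 𝒞 ↔ SatV φ ![X, p]) :
    ∀ B : PreStruct, B.code ∈ 𝒞 →
      ∃ A : PreStruct, A.code ∈ 𝒞 ∧ A.code ∈ Hset κ ∧ ElemEmbeddable A B := by
  intro B hB
  obtain ⟨t, ht, hpt, htκ⟩ := hp
  set s : Set ZFSet := t.toSet ∪ {p, B.dom, B.rel, B.un}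
  set N := B.hull s
  have hsN : s ⊆ N := B.subset_hull s
  have hV : IsTarskiVaughtV N := B.isTarskiVaughtV_hull s
  have hpair := hV.isPairClosed
  have hκ' : Cardinal.aleph0 < Cardinal.lift.{1} κ := Cardinal.aleph0_lt_lift.2 hκ
  have hsκ : Cardinal.mk s < Cardinal.lift.{1} κ := (Cardinal.mk_union_le _ _).trans_lt
    (Cardinal.add_lt_of_lt hκ'.le htκ ((Set.toFinite _).lt_aleph0.trans hκ'))
  have hNκ : Cardinal.mk N < Cardinal.lift.{1} κ := (B.mk_hull_le s).trans_lt (max_lt hκ' hsκ)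
  have hcodeN : B.code ∈ N :=
    hpair.pair_mem (hsN (by simp [s])) (hpair.pair_mem (hsN (by simp [s])) (hsN (by simp [s])))
  have hcode : (B.collapse N).code = ZFSet.collapse N B.code :=
    B.code_collapse hpair (hsN (by simp [s])) (hsN (by simp [s])) (hsN (by simp [s]))
  have hp : ZFSet.collapse N p = p := ZFSet.collapse_eq_self ht (fun x hx => hsN (.inl hx)) hpt
  refine ⟨B.collapse N, (hdef _).2 ?_, ?_,
    B.elemEmbeddable_collapse hV.isExtensional hpair (B.isTarskiVaught_hull s)⟩
  · have h := satV_collapse_of_isSigmaFml (hV.sigmaElementary 1) hV.isExtensional hφ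
      (xs := ![B.code, p]) (fun i => by fin_cases i; exacts [hcodeN, hsN (by simp [s])])
      ((hdef _).1 hB)
    convert h using 1
    funext i
    fin_cases i <;> simp [hcode, hp]
  · rw [hcode]
    exact mem_Hset_of_mem_transClass (ZFSet.transClass_image_collapse N)
      (Cardinal.mk_image_le.trans_lt hNκ) ⟨_, hcodeN, rfl⟩
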